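/- Let Ω ⊆ ℝ² be a connected open set and let λ : ℝ² → ℂ be continuously differentiable on Ω with Im λ > 0 and λ_x + λ·λ_y = 0 on Ω. Assume Φ ≠ 0 at every point of Ω and that the canonical coordinate ξ is injective on Ω. Then ξ(Ω) is an open subset of ℂ, and for every function f : ℝ² → ℂ continuously differentiable on Ω the following are equivalent: (i) f_x + λ·f_y = 0 at every point of Ω; (ii) there exists a function g : ℂ → ℂ holomorphic on ξ(Ω) with f(x,y) = g(ξ(x,y)) for all (x,y) ∈ Ω. Moreover, in case (ii) the values of g on ξ(Ω) are uniquely determined by f. -/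

import Mathlib

open Complex

noncomputable def pdx (f : ℝ × ℝ → ℂ) (p : ℝ × ℝ) : ℂ := fderiv ℝ f p (1, 0)
noncomputable def pdy (f : ℝ × ℝ → ℂ) (p : ℝ × ℝ) : ℂ := fderiv ℝ f p (0, 1)

/-- The canonical coordinate `ξ(x,y) = y − λ(x,y)·x`. -/
noncomputable def xiC (lam : ℝ × ℝ → ℂ) (p : ℝ × ℝ) : ℂ := (p.2 : ℂ) - lam p * (p.1 : ℂ)

/-- The characteristic Jacobian. -/
noncomputable def Phi (lam : ℝ × ℝ → ℂ) (p : ℝ × ℝ) : ℂ :=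
  (lam p - (starRingEnd ℂ) (lam p))
    - (p.1 : ℂ) * ((starRingEnd ℂ) (pdx lam p) + lam p * (starRingEnd ℂ) (pdy lam p))

/-!
The canonical coordinate `ξ` is itself a solution of `f_x + λ f_y = 0`, and at a point `p` the
differential of any solution is a complex multiple of the `ℝ`-linear form `v ↦ v₂ - λ(p) v₁`.
For rigid `λ` one has `Φ = (λ - conj λ) · conj ξ_y`, so `Φ ≠ 0` makes this form injective and
`ξ_y ≠ 0`; hence `dξ` is invertible everywhere on `Ω`, and by the inverse function theorem the
injective map `ξ` is a diffeomorphism onto the open set `ξ(Ω)`. A solution `f` then satisfies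
`df = c · dξ` with `c ∈ ℂ`, which says precisely that `f ∘ ξ⁻¹` is complex differentiable.
Conversely `g ∘ ξ` is a solution by the chain rule.
-/

open ComplexConjugate Topology

noncomputable def rigidForm (a : ℂ) : ℝ × ℝ →L[ℝ] ℂ :=
  ofRealCLM.comp (ContinuousLinearMap.snd ℝ ℝ ℝ) -
    a • ofRealCLM.comp (ContinuousLinearMap.fst ℝ ℝ ℝ)

@[simp]
lemma rigidForm_apply (a : ℂ) (v : ℝ × ℝ) : rigidForm a v = v.2 - a * v.1 := by
  simp [rigidForm]

lemma rigidForm_injective {a : ℂ} (ha : a.im ≠ 0) : Function.Injective (rigidForm a) := by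
  refine (injective_iff_map_eq_zero _).2 fun v hv => ?_
  rw [rigidForm_apply] at hv
  have h1 : v.1 = 0 := by simpa [ha] using congrArg Complex.im hv
  have h2 : v.2 = 0 := by simpa [h1] using congrArg Complex.re hv
  exact Prod.ext h1 h2

lemma fderiv_eq_pdy_smul_rigidForm {f : ℝ × ℝ → ℂ} {p : ℝ × ℝ} {a : ℂ}
    (h : pdx f p + a * pdy f p = 0) : fderiv ℝ f p = pdy f p • rigidForm a := by
  ext
  · simp only [pdx, pdy] at h ⊢
    simp only [ContinuousLinearMap.comp_apply, ContinuousLinearMap.inl_apply,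
      ContinuousLinearMap.smul_comp, smul_apply, rigidForm_apply, ofReal_zero,
      ofReal_one, mul_one, zero_sub, smul_eq_mul, mul_neg]
    linear_combination h
  · simp [pdy]

lemma fderiv_eq_smul_fderiv_of_rigid {f h : ℝ × ℝ → ℂ} {p : ℝ × ℝ} {a : ℂ}
    (hf : pdx f p + a * pdy f p = 0) (hh : pdx h p + a * pdy h p = 0) (hpdy : pdy h p ≠ 0) :
    fderiv ℝ f p = (pdy f p / pdy h p) • fderiv ℝ h p := by
  rw [fderiv_eq_pdy_smul_rigidForm hf, fderiv_eq_pdy_smul_rigidForm hh, smul_smul,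
    div_mul_cancel₀ _ hpdy]

lemma pdx_comp {g : ℂ → ℂ} {h : ℝ × ℝ → ℂ} {p : ℝ × ℝ} (hg : DifferentiableAt ℂ g (h p))
    (hh : DifferentiableAt ℝ h p) : pdx (g ∘ h) p = deriv g (h p) * pdx h p := by
  simp [pdx, fderiv_comp p (hg.restrictScalars ℝ) hh, hg.fderiv_restrictScalars ℝ, mul_comm]

lemma pdy_comp {g : ℂ → ℂ} {h : ℝ × ℝ → ℂ} {p : ℝ × ℝ} (hg : DifferentiableAt ℂ g (h p))
    (hh : DifferentiableAt ℝ h p) : pdy (g ∘ h) p = deriv g (h p) * pdy h p := by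
  simp [pdy, fderiv_comp p (hg.restrictScalars ℝ) hh, hg.fderiv_restrictScalars ℝ, mul_comm]

lemma rigid_of_eventuallyEq_comp {f h : ℝ × ℝ → ℂ} {g : ℂ → ℂ} {p : ℝ × ℝ} {a : ℂ}
    (hfg : f =ᶠ[𝓝 p] g ∘ h) (hg : DifferentiableAt ℂ g (h p)) (hh : DifferentiableAt ℝ h p)
    (hrigid : pdx h p + a * pdy h p = 0) : pdx f p + a * pdy f p = 0 := by
  have hx : pdx f p = pdx (g ∘ h) p := by simp only [pdx, hfg.fderiv_eq]
  have hy : pdy f p = pdy (g ∘ h) p := by simp only [pdy, hfg.fderiv_eq]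
  rw [hx, hy, pdx_comp hg hh, pdy_comp hg hh]
  linear_combination deriv g (h p) * hrigid

section InverseFunction

variable {𝕜 E F : Type*} [NontriviallyNormedField 𝕜]
  [NormedAddCommGroup E] [NormedSpace 𝕜 E] [NormedAddCommGroup F] [NormedSpace 𝕜 F]

lemma ContinuousLinearMap.exists_equiv_of_injective [CompleteSpace 𝕜] [FiniteDimensional 𝕜 E]
    [FiniteDimensional 𝕜 F] (hdim : Module.finrank 𝕜 E = Module.finrank 𝕜 F) {T : E →L[𝕜] F}
    (hT : Function.Injective T) : ∃ T' : E ≃L[𝕜] F, (T' : E →L[𝕜] F) = T :=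
  ⟨(T.toLinearMap.linearEquivOfInjective hT hdim).toContinuousLinearEquiv, rfl⟩

lemma IsOpen.image_of_hasStrictFDerivAt_equiv [CompleteSpace E] {f : E → F} {s : Set E}
    (hs : IsOpen s) (hf : ∀ x ∈ s, ∃ f' : E ≃L[𝕜] F, HasStrictFDerivAt f (f' : E →L[𝕜] F) x) :
    IsOpen (f '' s) := by
  rw [isOpen_iff_mem_nhds]
  rintro _ ⟨x, hx, rfl⟩
  obtain ⟨f', hf'⟩ := hf x hx
  rw [← hf'.map_nhds_eq_of_equiv]
  exact Filter.image_mem_map (hs.mem_nhds hx)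

end InverseFunction

section HolomorphicFactorization

variable {E : Type*} [NormedAddCommGroup E] [NormedSpace ℝ E]

lemma HasFDerivAt.hasDerivAt_comp_of_smul_equiv {ψ : ℂ → E} {f : E → ℂ} {T : E ≃L[ℝ] ℂ}
    {c z : ℂ} (hψ : HasFDerivAt ψ (T.symm : ℂ →L[ℝ] E) z)
    (hf : HasFDerivAt f (c • (T : E →L[ℝ] ℂ)) (ψ z)) : HasDerivAt (f ∘ ψ) c z := by
  refine hasFDerivAt_of_restrictScalars ℝ (hf.comp z hψ) ?_
  ext w
  simp [mul_comm]

lemma differentiableOn_comp_invFunOn [CompleteSpace E] {Ω : Set E} (hΩ : IsOpen Ω)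
    {ξ f : E → ℂ} (hinj : Set.InjOn ξ Ω)
    (hξ : ∀ p ∈ Ω, ∃ T : E ≃L[ℝ] ℂ, HasStrictFDerivAt ξ (T : E →L[ℝ] ℂ) p)
    (hf : ∀ p ∈ Ω, ∃ c : ℂ, HasFDerivAt f (c • fderiv ℝ ξ p) p) :
    DifferentiableOn ℂ (f ∘ Function.invFunOn ξ Ω) (ξ '' Ω) := by
  rintro _ ⟨p, hp, rfl⟩
  obtain ⟨T, hT⟩ := hξ p hp
  obtain ⟨c, hc⟩ := hf p hp
  have hleft : ∀ᶠ x in 𝓝 p, Function.invFunOn ξ Ω (ξ x) = x :=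
    Filter.eventually_of_mem (hΩ.mem_nhds hp) fun x hx => hinj.leftInvOn_invFunOn hx
  have hψ := (hT.to_local_left_inverse hleft).hasFDerivAt
  rw [hT.hasFDerivAt.fderiv, ← hleft.self_of_nhds] at hc
  exact (hψ.hasDerivAt_comp_of_smul_equiv hc).differentiableAt.differentiableWithinAt

end HolomorphicFactorization

lemma hasFDerivAt_xiC {lam : ℝ × ℝ → ℂ} {p : ℝ × ℝ} (hlam : DifferentiableAt ℝ lam p) :
    HasFDerivAt (xiC lam)
      (ofRealCLM.comp (ContinuousLinearMap.snd ℝ ℝ ℝ) -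
        (lam p • ofRealCLM.comp (ContinuousLinearMap.fst ℝ ℝ ℝ) + (p.1 : ℂ) • fderiv ℝ lam p)) p :=
  (ofRealCLM.comp (ContinuousLinearMap.snd ℝ ℝ ℝ)).hasFDerivAt.sub
    (hlam.hasFDerivAt.mul (ofRealCLM.comp (ContinuousLinearMap.fst ℝ ℝ ℝ)).hasFDerivAt)

lemma pdx_xiC {lam : ℝ × ℝ → ℂ} {p : ℝ × ℝ} (hlam : DifferentiableAt ℝ lam p) :
    pdx (xiC lam) p = -lam p - p.1 * pdx lam p := by
  simp only [pdx, (hasFDerivAt_xiC hlam).fderiv, sub_apply,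
    ContinuousLinearMap.comp_apply, ContinuousLinearMap.coe_snd', ofRealCLM_apply, ofReal_zero,
    add_apply, smul_apply, ContinuousLinearMap.coe_fst',
    ofReal_one, smul_eq_mul, mul_one, zero_sub]
  ring

lemma pdy_xiC {lam : ℝ × ℝ → ℂ} {p : ℝ × ℝ} (hlam : DifferentiableAt ℝ lam p) :
    pdy (xiC lam) p = 1 - p.1 * pdy lam p := by
  simp [pdy, (hasFDerivAt_xiC hlam).fderiv]

lemma contDiffOn_xiC {lam : ℝ × ℝ → ℂ} {Ω : Set (ℝ × ℝ)} {n : WithTop ℕ∞}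
    (hlam : ContDiffOn ℝ n lam Ω) : ContDiffOn ℝ n (xiC lam) Ω := by
  have hcoe : ContDiff ℝ n ((↑) : ℝ → ℂ) := ofRealCLM.contDiff
  exact (hcoe.comp contDiff_snd).contDiffOn.sub (hlam.mul (hcoe.comp contDiff_fst).contDiffOn)

lemma xiC_rigid {lam : ℝ × ℝ → ℂ} {p : ℝ × ℝ} (hlam : DifferentiableAt ℝ lam p)
    (hrigid : pdx lam p + lam p * pdy lam p = 0) :
    pdx (xiC lam) p + lam p * pdy (xiC lam) p = 0 := by
  rw [pdx_xiC hlam, pdy_xiC hlam]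
  linear_combination (-(p.1 : ℂ)) * hrigid

lemma Phi_eq_of_rigid {lam : ℝ × ℝ → ℂ} {p : ℝ × ℝ} (hlam : DifferentiableAt ℝ lam p)
    (hrigid : pdx lam p + lam p * pdy lam p = 0) :
    Phi lam p = (lam p - conj (lam p)) * conj (pdy (xiC lam) p) := by
  rw [pdy_xiC hlam, Phi, eq_neg_of_add_eq_zero_left hrigid]
  simp only [map_sub, map_mul, map_neg, map_one, conj_ofReal]
  ring

lemma Phi_ne_zero_iff_of_rigid {lam : ℝ × ℝ → ℂ} {p : ℝ × ℝ}
    (hlam : DifferentiableAt ℝ lam p) (hrigid : pdx lam p + lam p * pdy lam p = 0) :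
    Phi lam p ≠ 0 ↔ (lam p).im ≠ 0 ∧ pdy (xiC lam) p ≠ 0 := by
  simp [Phi_eq_of_rigid hlam hrigid, sub_conj]

lemma exists_hasStrictFDerivAt_xiC {Ω : Set (ℝ × ℝ)} (hΩ : IsOpen Ω) {lam : ℝ × ℝ → ℂ}
    (hlam : ContDiffOn ℝ 1 lam Ω) {p : ℝ × ℝ} (hp : p ∈ Ω)
    (hrigid : pdx lam p + lam p * pdy lam p = 0) (hΦ : Phi lam p ≠ 0) :
    ∃ T : (ℝ × ℝ) ≃L[ℝ] ℂ, HasStrictFDerivAt (xiC lam) (T : ℝ × ℝ →L[ℝ] ℂ) p := by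
  have hlamp := (hlam.differentiableOn one_ne_zero).differentiableAt (hΩ.mem_nhds hp)
  obtain ⟨him, hpdy⟩ := (Phi_ne_zero_iff_of_rigid hlamp hrigid).1 hΦ
  have hinj : Function.Injective (fderiv ℝ (xiC lam) p) := by
    rw [fderiv_eq_pdy_smul_rigidForm (xiC_rigid hlamp hrigid)]
    exact (mul_right_injective₀ hpdy).comp (rigidForm_injective him)
  obtain ⟨T, hT⟩ := ContinuousLinearMap.exists_equiv_of_injective (by simp) hinj
  exact ⟨T, hT ▸ ((contDiffOn_xiC hlam).contDiffAt (hΩ.mem_nhds hp)).hasStrictFDerivAt one_ne_zero⟩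

theorem stmt14_general
    (Ω : Set (ℝ × ℝ)) (hΩ : IsOpen Ω)
    (lam : ℝ × ℝ → ℂ)
    (hlam : ContDiffOn ℝ 1 lam Ω)
    (hrigid : ∀ p ∈ Ω, pdx lam p + lam p * pdy lam p = 0)
    (hΦ : ∀ p ∈ Ω, Phi lam p ≠ 0)
    (hinj : Set.InjOn (xiC lam) Ω) :
    IsOpen (xiC lam '' Ω) ∧
    ∀ f : ℝ × ℝ → ℂ, ContDiffOn ℝ 1 f Ω →
      (((∀ p ∈ Ω, pdx f p + lam p * pdy f p = 0) ↔
        (∃ g : ℂ → ℂ, DifferentiableOn ℂ g (xiC lam '' Ω) ∧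
          ∀ p ∈ Ω, f p = g (xiC lam p))) ∧
      (∀ g₁ g₂ : ℂ → ℂ,
        DifferentiableOn ℂ g₁ (xiC lam '' Ω) → DifferentiableOn ℂ g₂ (xiC lam '' Ω) →
        (∀ p ∈ Ω, f p = g₁ (xiC lam p)) → (∀ p ∈ Ω, f p = g₂ (xiC lam p)) →
        Set.EqOn g₁ g₂ (xiC lam '' Ω))) := by
  have hlamd p (hp : p ∈ Ω) := (hlam.differentiableOn one_ne_zero).differentiableAt (hΩ.mem_nhds hp)
  have hξd p (hp : p ∈ Ω) :=
    ((contDiffOn_xiC hlam).differentiableOn one_ne_zero).differentiableAt (hΩ.mem_nhds hp)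
  have hξrigid p (hp : p ∈ Ω) := xiC_rigid (hlamd p hp) (hrigid p hp)
  have hξ p (hp : p ∈ Ω) := exists_hasStrictFDerivAt_xiC hΩ hlam hp (hrigid p hp) (hΦ p hp)
  have hopen : IsOpen (xiC lam '' Ω) := hΩ.image_of_hasStrictFDerivAt_equiv hξ
  refine ⟨hopen, fun f hf => ⟨⟨fun hf_rigid => ?_, ?_⟩, ?_⟩⟩
  · refine ⟨f ∘ Function.invFunOn (xiC lam) Ω, differentiableOn_comp_invFunOn hΩ hinj hξ ?_,
      fun p hp => by simp [hinj.leftInvOn_invFunOn hp]⟩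
    intro p hp
    have hfd := (hf.differentiableOn one_ne_zero).differentiableAt (hΩ.mem_nhds hp)
    have hpdy := ((Phi_ne_zero_iff_of_rigid (hlamd p hp) (hrigid p hp)).1 (hΦ p hp)).2
    exact ⟨_, fderiv_eq_smul_fderiv_of_rigid (hf_rigid p hp) (hξrigid p hp) hpdy ▸ hfd.hasFDerivAt⟩
  · rintro ⟨g, hg, hfg⟩ p hp
    exact rigid_of_eventuallyEq_comp (Filter.eventually_of_mem (hΩ.mem_nhds hp) hfg)
      (hg.differentiableAt (hopen.mem_nhds ⟨p, hp, rfl⟩)) (hξd p hp) (hξrigid p hp)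
  · rintro g₁ g₂ - - h₁ h₂ _ ⟨p, hp, rfl⟩
    rw [← h₁ p hp, ← h₂ p hp]

/-- General rigid holomorphic function, global form: on a connected open set
where `Φ ≠ 0` and `ξ` is injective, solutions of `f_x + λ f_y = 0` are exactly
the functions `g ∘ ξ` with `g` holomorphic on the open set `ξ(Ω)`, and `g` is
uniquely determined on `ξ(Ω)` by `f`. -/
theorem stmt14
    (Ω : Set (ℝ × ℝ)) (hΩ : IsOpen Ω) (hconn : IsConnected Ω)
    (lam : ℝ × ℝ → ℂ)
    (hlam : ContDiffOn ℝ 1 lam Ω)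
    (him : ∀ p ∈ Ω, 0 < (lam p).im)
    (hrigid : ∀ p ∈ Ω, pdx lam p + lam p * pdy lam p = 0)
    (hΦ : ∀ p ∈ Ω, Phi lam p ≠ 0)
    (hinj : Set.InjOn (xiC lam) Ω) :
    IsOpen (xiC lam '' Ω) ∧
    ∀ f : ℝ × ℝ → ℂ, ContDiffOn ℝ 1 f Ω →
      (((∀ p ∈ Ω, pdx f p + lam p * pdy f p = 0) ↔
        (∃ g : ℂ → ℂ, DifferentiableOn ℂ g (xiC lam '' Ω) ∧
          ∀ p ∈ Ω, f p = g (xiC lam p))) ∧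
      (∀ g₁ g₂ : ℂ → ℂ,
        DifferentiableOn ℂ g₁ (xiC lam '' Ω) → DifferentiableOn ℂ g₂ (xiC lam '' Ω) →
        (∀ p ∈ Ω, f p = g₁ (xiC lam p)) → (∀ p ∈ Ω, f p = g₂ (xiC lam p)) →
        Set.EqOn g₁ g₂ (xiC lam '' Ω))) :=
  stmt14_general Ω hΩ lam hlam hrigid hΦ hinj
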